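/- arXiv:1005.3142 — 2 statements merged into one kernel-verified Lean document; each statement's English description precedes it below -/
import Mathlib

section
/- Let (X,≤) be a partially ordered set with a metric d making (X,d) a complete metric space. Assume: (i) if a nondecreasing sequence {xₙ} converges to x, then xₙ ≤ x for all n; (ii) if a nonincreasing sequence {yₙ} converges to y, then yₙ ≥ y for all n. Let F: X×X → X have the mixed monotone property (no continuity assumed). Suppose there exist α, β > 0 with α + β < 1 such that d(F(x,y),F(u,v)) ≤ α·M((x,y),(u,v)) + (β/2)[d(x,u)+d(y,v)] for all x ≥ u, y ≤ v, where M is as defined. If there exist x₀, y₀ with x₀ ≤ F(x₀,y₀) and y₀ ≥ F(y₀,x₀), then F has a coupled fixed point. -/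
/-!
Iterate `(x, y) ↦ (F x y, F y x)` from `(x₀, y₀)`. By mixed monotonicity the first coordinates
increase and the second ones decrease, so consecutive iterates are comparable and the contraction
condition applies to them. Along the orbit `M` collapses to the next displacement, so in the max
metric of `X × X` the displacements shrink by the factor `β / (1 - α)` and the orbit converges.
The order hypotheses make the limit comparable with every iterate, and there `M` is bounded by a
multiple of the vanishing displacement, so the images of the iterates converge to the image of the
limit as well.
-/

open Filter Topology

/-- Mixed monotone property: `x ↦ F x y` nondecreasing, `y ↦ F x y` nonincreasing. -/
def MixedMonotone {X : Type*} [PartialOrder X] (F : X → X → X) : Prop :=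
  (∀ y, Monotone fun x => F x y) ∧ (∀ x, Antitone fun y => F x y)

/-- The rational expression `M((x,y),(u,v))` from the paper. -/
noncomputable def Mexpr {X : Type*} [MetricSpace X] (F : X → X → X) (x y u v : X) : ℝ :=
  min (dist x (F x y) * (2 + dist u (F u v) + dist v (F v u)) / (2 + dist x u + dist y v))
      (dist u (F u v) * (2 + dist x (F x y) + dist y (F y x)) / (2 + dist x u + dist y v))

theorem cauchySeq_of_dist_succ_le_mul {E : Type*} [PseudoMetricSpace E] {f : ℕ → E} {r : ℝ}
    (hr₀ : 0 ≤ r) (hr₁ : r < 1)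
    (h : ∀ n, dist (f (n + 1)) (f (n + 2)) ≤ r * dist (f n) (f (n + 1))) : CauchySeq f :=
  cauchySeq_of_le_geometric r (dist (f 0) (f 1)) hr₁ fun n => by
    rw [mul_comm]
    exact le_geom (u := fun n => dist (f n) (f (n + 1))) hr₀ n fun k _ => h k

theorem half_mul_add_le_mul_max {β : ℝ} (hβ : 0 ≤ β) (a b : ℝ) :
    β / 2 * (a + b) ≤ β * max a b := by
  nlinarith [le_max_left a b, le_max_right a b]

section Mexpr

variable {X : Type*} [MetricSpace X] {F : X → X → X} {x y u v : X}

theorem Mexpr_le_of_apply_eq_left (hx : F u v = x) (hy : F v u = y) :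
    Mexpr F x y u v ≤ dist x (F x y) := by
  refine (min_le_left _ _).trans_eq ?_
  have hpos : 0 < 2 + dist x u + dist y v := by positivity
  rw [hx, hy, dist_comm u x, dist_comm v y, mul_div_assoc, div_self hpos.ne', mul_one]

theorem Mexpr_le_of_apply_eq_right (hu : F x y = u) (hv : F y x = v) :
    Mexpr F x y u v ≤ dist u (F u v) := by
  refine (min_le_right _ _).trans_eq ?_
  have hpos : 0 < 2 + dist x u + dist y v := by positivity
  rw [hu, hv, mul_div_assoc, div_self hpos.ne', mul_one]

theorem Mexpr_le_left :
    Mexpr F x y u v ≤ dist x (F x y) * (2 + dist u (F u v) + dist v (F v u)) / 2 :=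
  (min_le_left _ _).trans <| div_le_div_of_nonneg_left (by positivity) two_pos
    (le_add_of_le_of_nonneg (le_add_of_nonneg_right dist_nonneg) dist_nonneg)

theorem Mexpr_le_right :
    Mexpr F x y u v ≤ dist u (F u v) * (2 + dist x (F x y) + dist y (F y x)) / 2 :=
  (min_le_right _ _).trans <| div_le_div_of_nonneg_left (by positivity) two_pos
    (le_add_of_le_of_nonneg (le_add_of_nonneg_right dist_nonneg) dist_nonneg)

end Mexpr

def coupledMap {X : Type*} (F : X → X → X) (p : X × X) : X × X :=
  (F p.1 p.2, F p.2 p.1)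

namespace MixedMonotone

variable {X : Type*} [PartialOrder X] {F : X → X → X}

theorem apply_le_apply (hF : MixedMonotone F) {x x' y y' : X} (hx : x ≤ x') (hy : y' ≤ y) :
    F x y ≤ F x' y' :=
  (hF.1 y hx).trans (hF.2 x' hy)

theorem coupledMap_le (hF : MixedMonotone F) {p q : X × X} (h₁ : p.1 ≤ q.1) (h₂ : q.2 ≤ p.2) :
    (coupledMap F p).1 ≤ (coupledMap F q).1 ∧ (coupledMap F q).2 ≤ (coupledMap F p).2 :=
  ⟨hF.apply_le_apply h₁ h₂, hF.apply_le_apply h₂ h₁⟩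

theorem monotone_antitone_iterate_coupledMap (hF : MixedMonotone F) {p : X × X}
    (h₁ : p.1 ≤ (coupledMap F p).1) (h₂ : (coupledMap F p).2 ≤ p.2) :
    Monotone (fun n => ((coupledMap F)^[n] p).1) ∧
      Antitone (fun n => ((coupledMap F)^[n] p).2) := by
  have step : ∀ n, ((coupledMap F)^[n] p).1 ≤ ((coupledMap F)^[n + 1] p).1 ∧
      ((coupledMap F)^[n + 1] p).2 ≤ ((coupledMap F)^[n] p).2 := by
    intro n
    induction n with
    | zero => exact ⟨h₁, h₂⟩
    | succ n ih =>
      simp only [Function.iterate_succ_apply'] at ih ⊢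
      exact hF.coupledMap_le ih.1 ih.2
  exact ⟨monotone_nat_of_le_succ fun n => (step n).1, antitone_nat_of_succ_le fun n => (step n).2⟩

end MixedMonotone

section Contraction

variable {X : Type*} [MetricSpace X] [PartialOrder X] {F : X → X → X} {α β : ℝ}

theorem dist_coupledMap_coupledMap_le
    (hcontr : ∀ x y u v : X, u ≤ x → y ≤ v →
      dist (F x y) (F u v) ≤ α * Mexpr F x y u v + β / 2 * (dist x u + dist y v))
    (hα : 0 ≤ α) (hα₁ : α < 1) (hβ : 0 ≤ β) {p : X × X} (h₁ : p.1 ≤ (coupledMap F p).1)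
    (h₂ : (coupledMap F p).2 ≤ p.2) :
    dist (coupledMap F p) (coupledMap F (coupledMap F p)) ≤
      β / (1 - α) * dist p (coupledMap F p) := by
  obtain ⟨u, v⟩ := p
  set x := F u v
  set y := F v u
  have hm : β / 2 * (dist x u + dist y v) ≤ β * dist (x, y) (u, v) :=
    half_mul_add_le_mul_max hβ _ _
  have ha : dist x (F x y) ≤ α * dist x (F x y) + β * dist (x, y) (u, v) := by
    have h := hcontr x y u v h₁ h₂
    have hM : Mexpr F x y u v ≤ dist x (F x y) := Mexpr_le_of_apply_eq_left rfl rfl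
    rw [dist_comm] at h
    linarith [mul_le_mul_of_nonneg_left hM hα]
  have hb : dist y (F y x) ≤ α * dist y (F y x) + β * dist (x, y) (u, v) := by
    have h := hcontr v u y x h₂ h₁
    have hM : Mexpr F v u y x ≤ dist y (F y x) := Mexpr_le_of_apply_eq_right rfl rfl
    rw [dist_comm v y, dist_comm u x, add_comm] at h
    linarith [mul_le_mul_of_nonneg_left hM hα]
  have hk : 0 < 1 - α := by linarith
  show dist (x, y) (F x y, F y x) ≤ β / (1 - α) * dist (u, v) (x, y)
  rw [Prod.dist_eq, dist_comm (u, v), div_mul_eq_mul_div]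
  exact max_le ((le_div_iff₀ hk).2 (by linarith)) ((le_div_iff₀ hk).2 (by linarith))

theorem dist_coupledMap_le_of_le
    (hcontr : ∀ x y u v : X, u ≤ x → y ≤ v →
      dist (F x y) (F u v) ≤ α * Mexpr F x y u v + β / 2 * (dist x u + dist y v))
    (hα : 0 ≤ α) (hβ : 0 ≤ β) {p q : X × X} (h₁ : p.1 ≤ q.1) (h₂ : q.2 ≤ p.2) :
    dist (coupledMap F p) (coupledMap F q) ≤
      α * (1 + dist q (coupledMap F q)) * dist p (coupledMap F p) + β * dist p q := by
  obtain ⟨u, v⟩ := p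
  obtain ⟨x, y⟩ := q
  set c := dist (x, y) (coupledMap F (x, y))
  set δ := dist (u, v) (coupledMap F (u, v))
  have hc : dist x (F x y) ≤ c ∧ dist y (F y x) ≤ c := ⟨le_max_left _ _, le_max_right _ _⟩
  have hδ : dist u (F u v) ≤ δ ∧ dist v (F v u) ≤ δ := ⟨le_max_left _ _, le_max_right _ _⟩
  have hm : β / 2 * (dist u x + dist v y) ≤ β * dist (u, v) (x, y) :=
    half_mul_add_le_mul_max hβ _ _
  have ha : dist (F u v) (F x y) ≤ α * (δ * (1 + c)) + β * dist (u, v) (x, y) := by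
    have hM : Mexpr F x y u v ≤ δ * (1 + c) := by
      calc Mexpr F x y u v ≤ dist u (F u v) * (2 + dist x (F x y) + dist y (F y x)) / 2 :=
            Mexpr_le_right
        _ ≤ δ * (2 + c + c) / 2 := by gcongr <;> simp only [hc, hδ]
        _ = δ * (1 + c) := by ring
    have h := hcontr x y u v h₁ h₂
    rw [dist_comm x u, dist_comm y v] at h
    rw [dist_comm]
    linarith [mul_le_mul_of_nonneg_left hM hα]
  have hb : dist (F v u) (F y x) ≤ α * (δ * (1 + c)) + β * dist (u, v) (x, y) := by
    have hM : Mexpr F v u y x ≤ δ * (1 + c) := by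
      calc Mexpr F v u y x ≤ dist v (F v u) * (2 + dist y (F y x) + dist x (F x y)) / 2 :=
            Mexpr_le_left
        _ ≤ δ * (2 + c + c) / 2 := by gcongr <;> simp only [hc, hδ]
        _ = δ * (1 + c) := by ring
    have h := hcontr v u y x h₂ h₁
    rw [add_comm (dist v y)] at h
    linarith [mul_le_mul_of_nonneg_left hM hα]
  rw [Prod.dist_eq]
  exact max_le (ha.trans_eq (by ring)) (hb.trans_eq (by ring))

theorem tendsto_coupledMap_of_tendsto
    (hcontr : ∀ x y u v : X, u ≤ x → y ≤ v →
      dist (F x y) (F u v) ≤ α * Mexpr F x y u v + β / 2 * (dist x u + dist y v))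
    (hα : 0 ≤ α) (hβ : 0 ≤ β) {p : ℕ → X × X} {q : X × X} (hpq : Tendsto p atTop (𝓝 q))
    (h₁ : ∀ n, (p n).1 ≤ q.1) (h₂ : ∀ n, q.2 ≤ (p n).2)
    (hδ : Tendsto (fun n => dist (p n) (coupledMap F (p n))) atTop (𝓝 0)) :
    Tendsto (fun n => coupledMap F (p n)) atTop (𝓝 (coupledMap F q)) := by
  rw [tendsto_iff_dist_tendsto_zero]
  refine squeeze_zero (fun n => dist_nonneg)
    (fun n => dist_coupledMap_le_of_le hcontr hα hβ (h₁ n) (h₂ n)) ?_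
  simpa using (hδ.const_mul _).add ((tendsto_iff_dist_tendsto_zero.1 hpq).const_mul β)

end Contraction

theorem coupled_fixed_point_exists_of_order_limits
    {X : Type*} [MetricSpace X] [PartialOrder X] [CompleteSpace X]
    (hup : ∀ (s : ℕ → X) (x : X), Monotone s → Tendsto s atTop (𝓝 x) → ∀ n, s n ≤ x)
    (hdown : ∀ (s : ℕ → X) (y : X), Antitone s → Tendsto s atTop (𝓝 y) → ∀ n, y ≤ s n)
    (F : X → X → X)
    (hmm : MixedMonotone F) (α β : ℝ) (hα : 0 < α) (hβ : 0 < β) (hαβ : α + β < 1)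
    (hcontr : ∀ x y u v : X, u ≤ x → y ≤ v →
      dist (F x y) (F u v) ≤ α * Mexpr F x y u v + β / 2 * (dist x u + dist y v))
    (x₀ y₀ : X) (hx₀ : x₀ ≤ F x₀ y₀) (hy₀ : F y₀ x₀ ≤ y₀) :
    ∃ x y : X, F x y = x ∧ F y x = y := by
  set p : ℕ → X × X := fun n => (coupledMap F)^[n] (x₀, y₀)
  have hsucc (n : ℕ) : p (n + 1) = coupledMap F (p n) := Function.iterate_succ_apply' _ _ _
  obtain ⟨hmono, hanti⟩ := hmm.monotone_antitone_iterate_coupledMap (p := (x₀, y₀)) hx₀ hy₀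
  have hstep (n : ℕ) : dist (p (n + 1)) (p (n + 2)) ≤ β / (1 - α) * dist (p n) (p (n + 1)) := by
    rw [hsucc (n + 1), hsucc n]
    refine dist_coupledMap_coupledMap_le hcontr hα.le (by linarith) hβ.le ?_ ?_
    · exact (hsucc n) ▸ hmono n.le_succ
    · exact (hsucc n) ▸ hanti n.le_succ
  have hk : β / (1 - α) < 1 := (div_lt_one (by linarith)).2 (by linarith)
  obtain ⟨q, hq⟩ := cauchySeq_tendsto_of_complete <|
    cauchySeq_of_dist_succ_le_mul (div_nonneg hβ.le (by linarith)) hk hstep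
  have hq' : Tendsto (fun n => coupledMap F (p n)) atTop (𝓝 q) := by
    simpa only [Function.comp_def, hsucc] using hq.comp (tendsto_add_atTop_nat 1)
  have hfix : coupledMap F q = q := by
    refine tendsto_nhds_unique (tendsto_coupledMap_of_tendsto hcontr hα.le hβ.le hq
      (hup _ _ hmono hq.fst_nhds) (hdown _ _ hanti hq.snd_nhds) ?_) hq'
    simpa using hq.dist hq'
  exact ⟨q.1, q.2, congrArg Prod.fst hfix, congrArg Prod.snd hfix⟩
end

section
/- Let (X,d,≤) be a partially ordered metric space and F: X×X → X satisfy the rational contraction condition d(F(x,y),F(u,v)) ≤ α·M((x,y),(u,v)) + (β/2)[d(x,u)+d(y,v)] for x ≥ u, y ≤ v, with α,β>0, α+β<1, and have the mixed monotone property. Let x₀ ≤ F(x₀,y₀), y₀ ≥ F(y₀,x₀), and define iterates x_{n+1} = F(xₙ,yₙ), y_{n+1} = F(yₙ,xₙ). Then for all n ≥ 1: d(x_{n+1},xₙ) ≤ (β/(1-α))ⁿ · [d(x₁,x₀)+d(y₁,y₀)]/2 and d(y_{n+1},yₙ) ≤ (β/(1-α))ⁿ · [d(x₁,x₀)+d(y₁,y₀)]/2.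 -/
/-!
Along the iteration the sequence `xₙ` increases and `yₙ` decreases, so consecutive iterates
are comparable and the contraction condition applies to them. For such a pair one of the two
fractions in `M` has numerator factor equal to its denominator, so `M` collapses to the very
distance being estimated; absorbing `α` times it into the left-hand side gives
`d(xₙ₊₂, xₙ₊₁), d(yₙ₊₂, yₙ₊₁) ≤ k · Sₙ / 2` with `k = β / (1 - α)` and
`Sₙ = d(xₙ₊₁, xₙ) + d(yₙ₊₁, yₙ)`. Hence `Sₙ₊₁ ≤ k Sₙ`, so `Sₙ ≤ kⁿ S₀`.
-/

open Filter Topology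

lemma le_div_one_sub_mul_of_le_mul_add {α β d s : ℝ} (hα : α < 1)
    (h : d ≤ α * d + β / 2 * s) : d ≤ β / (1 - α) * (s / 2) := by
  rw [div_mul_eq_mul_div, le_div_iff₀ (by linarith)]
  linarith

section MetricSpace

variable {X : Type*} [MetricSpace X]

lemma Mexpr_step_le_left (F : X → X → X) (x y : X) :
    Mexpr F (F x y) (F y x) x y ≤ dist (F (F x y) (F y x)) (F x y) := by
  have hden : 2 + dist (F x y) x + dist (F y x) y ≠ 0 := by positivity
  refine (min_le_left _ _).trans_eq ?_
  rw [dist_comm x, dist_comm y, mul_div_assoc, div_self hden, mul_one, dist_comm]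

lemma Mexpr_step_le_right (F : X → X → X) (x y : X) :
    Mexpr F y x (F y x) (F x y) ≤ dist (F (F y x) (F x y)) (F y x) := by
  have hden : 2 + dist y (F y x) + dist x (F x y) ≠ 0 := by positivity
  refine (min_le_right _ _).trans_eq ?_
  rw [mul_div_assoc, div_self hden, mul_one, dist_comm]

variable [PartialOrder X]

def IsRationalContraction (F : X → X → X) (α β : ℝ) : Prop :=
  ∀ x y u v : X, u ≤ x → y ≤ v →
    dist (F x y) (F u v) ≤ α * Mexpr F x y u v + β / 2 * (dist x u + dist y v)

variable {F : X → X → X} {α β : ℝ}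

theorem IsRationalContraction.dist_step_le_left (hF : IsRationalContraction F α β)
    (hα : 0 ≤ α) (hα₁ : α < 1) {x y : X} (hx : x ≤ F x y) (hy : F y x ≤ y) :
    dist (F (F x y) (F y x)) (F x y) ≤
      β / (1 - α) * ((dist (F x y) x + dist (F y x) y) / 2) := by
  refine le_div_one_sub_mul_of_le_mul_add hα₁ ((hF _ _ _ _ hx hy).trans ?_)
  gcongr
  exact Mexpr_step_le_left F x y

theorem IsRationalContraction.dist_step_le_right (hF : IsRationalContraction F α β)
    (hα : 0 ≤ α) (hα₁ : α < 1) {x y : X} (hx : x ≤ F x y) (hy : F y x ≤ y) :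
    dist (F (F y x) (F x y)) (F y x) ≤
      β / (1 - α) * ((dist (F x y) x + dist (F y x) y) / 2) := by
  refine le_div_one_sub_mul_of_le_mul_add hα₁ ?_
  calc dist (F (F y x) (F x y)) (F y x)
      = dist (F y x) (F (F y x) (F x y)) := dist_comm _ _
    _ ≤ α * Mexpr F y x (F y x) (F x y) + β / 2 * (dist y (F y x) + dist x (F x y)) :=
      hF _ _ _ _ hy hx
    _ ≤ α * dist (F (F y x) (F x y)) (F y x) + β / 2 * (dist (F x y) x + dist (F y x) y) := by
      rw [dist_comm y, dist_comm x, add_comm (dist (F y x) y)]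
      gcongr
      exact Mexpr_step_le_right F x y

end MetricSpace

theorem MixedMonotone.coupled_iterate_le {X : Type*} [PartialOrder X] {F : X → X → X}
    (hF : MixedMonotone F) {xs ys : ℕ → X} (hx₀ : xs 0 ≤ F (xs 0) (ys 0))
    (hy₀ : F (ys 0) (xs 0) ≤ ys 0) (hxs : ∀ n, xs (n + 1) = F (xs n) (ys n))
    (hys : ∀ n, ys (n + 1) = F (ys n) (xs n)) (n : ℕ) :
    xs n ≤ xs (n + 1) ∧ ys (n + 1) ≤ ys n := by
  induction n with
  | zero => exact ⟨(hxs 0).symm ▸ hx₀, (hys 0).symm ▸ hy₀⟩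
  | succ n ih =>
    constructor
    · calc xs (n + 1) = F (xs n) (ys n) := hxs n
        _ ≤ F (xs (n + 1)) (ys (n + 1)) := (hF.1 _ ih.1).trans (hF.2 _ ih.2)
        _ = xs (n + 2) := (hxs _).symm
    · calc ys (n + 2) = F (ys (n + 1)) (xs (n + 1)) := hys _
        _ ≤ F (ys n) (xs n) := (hF.1 _ ih.2).trans (hF.2 _ ih.1)
        _ = ys (n + 1) := (hys n).symm

theorem iterates_dist_bound
    {X : Type*} [MetricSpace X] [PartialOrder X]
    (F : X → X → X) (hmm : MixedMonotone F)
    (α β : ℝ) (hα : 0 < α) (hβ : 0 < β) (hαβ : α + β < 1)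
    (hcontr : ∀ x y u v : X, u ≤ x → y ≤ v →
      dist (F x y) (F u v) ≤ α * Mexpr F x y u v + β / 2 * (dist x u + dist y v))
    (xs ys : ℕ → X) (hx₀ : xs 0 ≤ F (xs 0) (ys 0)) (hy₀ : F (ys 0) (xs 0) ≤ ys 0)
    (hxs : ∀ n, xs (n + 1) = F (xs n) (ys n)) (hys : ∀ n, ys (n + 1) = F (ys n) (xs n)) :
    ∀ n : ℕ, 1 ≤ n →
      dist (xs (n + 1)) (xs n) ≤
        (β / (1 - α)) ^ n * ((dist (xs 1) (xs 0) + dist (ys 1) (ys 0)) / 2) ∧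
      dist (ys (n + 1)) (ys n) ≤
        (β / (1 - α)) ^ n * ((dist (xs 1) (xs 0) + dist (ys 1) (ys 0)) / 2) := by
  set k := β / (1 - α)
  set S : ℕ → ℝ := fun m ↦ dist (xs (m + 1)) (xs m) + dist (ys (m + 1)) (ys m)
  have hk : 0 ≤ k := div_nonneg hβ.le (by linarith)
  have hstep : ∀ m, dist (xs (m + 2)) (xs (m + 1)) ≤ k * (S m / 2) ∧
      dist (ys (m + 2)) (ys (m + 1)) ≤ k * (S m / 2) := by
    intro m
    obtain ⟨hx, hy⟩ := hmm.coupled_iterate_le hx₀ hy₀ hxs hys m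
    rw [hxs] at hx
    rw [hys] at hy
    have hx' := IsRationalContraction.dist_step_le_left hcontr hα.le (by linarith) hx hy
    have hy' := IsRationalContraction.dist_step_le_right hcontr hα.le (by linarith) hx hy
    rw [← hxs, ← hys, ← hxs] at hx'
    rw [← hxs, ← hys, ← hys] at hy'
    exact ⟨hx', hy'⟩
  have hS : ∀ m, S m ≤ k ^ m * S 0 := fun m ↦
    le_geom hk m fun j _ ↦ by linarith [hstep j]
  rintro n hn
  obtain ⟨m, rfl⟩ := Nat.exists_eq_add_of_le' hn
  have hbound : k * (S m / 2) ≤ k ^ (m + 1) * (S 0 / 2) :=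
    calc k * (S m / 2) ≤ k * (k ^ m * S 0 / 2) := by gcongr; exact hS m
      _ = k ^ (m + 1) * (S 0 / 2) := by ring
  exact ⟨(hstep m).1.trans hbound, (hstep m).2.trans hbound⟩
end
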